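/- arXiv:1702.05357 — 2 statements merged into one kernel-verified Lean document; each statement's English description precedes it below -/
import Mathlib

section
/- A chain complex X over A is I-trivial (Hom(X,W) acyclic for all W ∈ I) if and only if for every integer i the induced morphism d_i : coker(d_{i+1}) → X_{i-1} is an I-monomorphism. -/
open CategoryTheory CategoryTheory.Limits

universe v u

variable {A : Type u} [Category.{v} A] [Abelian A]

/-- The `Hom`-complex `Hom(X, W)` of abelian groups associated to a chain complex `X`
over `A` and an object `W` of `A`; following the convention that `Hom(X_k, W)` is placed
in (cohomological) degree `-k`, its degree `n` component is `Hom(X_{-n}, W)`. -/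
noncomputable def homComplex (X : ChainComplex A ℤ) (W : A) : ChainComplex AddCommGrpCat ℤ :=
  ChainComplex.of (fun n => AddCommGrpCat.of (X.X (-n) ⟶ W))
    (fun n => AddCommGrpCat.ofHom (AddMonoidHom.mk' (fun g => X.d (-n) (-(n+1)) ≫ g)
      (fun _ _ => Preadditive.comp_add _ _ _ _ _ _)))
    (fun n => by
      ext g
      show X.d (-n) (-(n+1)) ≫ (X.d (-(n+1)) (-(n+1+1)) ≫ g) = 0
      rw [← Category.assoc, HomologicalComplex.d_comp_d, Limits.zero_comp])

lemma homComplex_d (X : ChainComplex A ℤ) (W : A) (j : ℤ) :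
    (homComplex X W).d (j+1) j = AddCommGrpCat.ofHom (AddMonoidHom.mk' (fun g => X.d (-j) (-(j+1)) ≫ g)
      (fun _ _ => Preadditive.comp_add _ _ _ _ _ _)) :=
  by dsimp only [homComplex]; exact ChainComplex.of_d _ _ j

/-- The map of `Hom`-complexes induced by a chain map, given by precomposition. -/
noncomputable def homComplexMap {X Y : ChainComplex A ℤ} (f : X ⟶ Y) (W : A) :
    homComplex Y W ⟶ homComplex X W where
  f n := AddCommGrpCat.ofHom (AddMonoidHom.mk' (fun g => f.f (-n) ≫ g)
      (fun _ _ => Preadditive.comp_add _ _ _ _ _ _))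
  comm' i j hij := by
    obtain rfl : i = j + 1 := hij.symm
    ext g
    show (homComplex X W).d (j+1) j (f.f (-(j+1)) ≫ g) = f.f (-j) ≫ ((homComplex Y W).d (j+1) j g)
    rw [homComplex_d, homComplex_d]
    show X.d (-j) (-(j+1)) ≫ (f.f (-(j+1)) ≫ g) = f.f (-j) ≫ (Y.d (-j) (-(j+1)) ≫ g)
    revert g; intro (g : Y.X (-(j+1)) ⟶ W)
    rw [← Category.assoc, ← Category.assoc, HomologicalComplex.Hom.comm]

/-- `X` is `I`-trivial if for every `W ∈ I` the `Hom`-complex `Hom(X, W)` has trivial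
(co)homology in all degrees. -/
def IsITrivial (I : Set A) (X : ChainComplex A ℤ) : Prop :=
  ∀ W ∈ I, ∀ n : ℤ, Limits.IsZero ((homComplex X W).homology n)

/-- `f : M ⟶ N` is an `I`-monomorphism if for every `W ∈ I`, precomposition with `f`
induces a surjection `Hom(N, W) → Hom(M, W)`. -/
def IsIMono (I : Set A) {M N : A} (f : M ⟶ N) : Prop :=
  ∀ W ∈ I, Function.Surjective (fun g : N ⟶ W => f ≫ g)

/-! Exactness of `Hom(X, W)` at `Hom(X_i, W)` says that every map `X_i ⟶ W` killed by `d_{i+1}`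
extends along `d_i`. Maps killed by `d_{i+1}` are exactly the maps out of `coker d_{i+1}`, so this
is surjectivity of precomposition with the induced map `coker d_{i+1} ⟶ X_{i-1}`. -/

section Cokernel

variable {C : Type*} [Category C] [HasZeroMorphisms C]

lemma isIMono_cokernelDesc_iff (I : Set C) {P Q R : C} (a : P ⟶ Q) (b : Q ⟶ R) [HasCokernel a]
    (w : a ≫ b = 0) :
    IsIMono I (cokernel.desc a b w) ↔
      ∀ W ∈ I, ∀ g : Q ⟶ W, a ≫ g = 0 → ∃ h : R ⟶ W, b ≫ h = g := by
  refine forall₂_congr fun W _ => ⟨fun H g hg => ?_, fun H φ => ?_⟩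
  · obtain ⟨h, hh⟩ := H (cokernel.desc a g hg)
    exact ⟨h, by simpa using cokernel.π a ≫= hh⟩
  · obtain ⟨h, hh⟩ := H (cokernel.π a ≫ φ) (by rw [cokernel.condition_assoc, zero_comp])
    exact ⟨h, coequalizer.hom_ext (by simpa using hh)⟩

end Cokernel

lemma isZero_homology_homComplex_iff (X : ChainComplex A ℤ) (W : A) (n : ℤ) :
    IsZero ((homComplex X W).homology n) ↔
      ∀ g : X.X (-n) ⟶ W, X.d (-(n-1)) (-n) ≫ g = 0 →
        ∃ h : X.X (-(n+1)) ⟶ W, X.d (-n) (-(n+1)) ≫ h = g := by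
  have d_out := homComplex_d X W n
  have d_in := homComplex_d X W (n-1)
  rw [sub_add_cancel] at d_in
  rw [← HomologicalComplex.exactAt_iff_isZero_homology,
    (homComplex X W).exactAt_iff' (n+1) n (n-1) (by simp) (by simp),
    ShortComplex.ab_exact_iff]
  dsimp only [HomologicalComplex.sc', HomologicalComplex.shortComplexFunctor']
  rw [d_in, d_out]
  rfl

lemma isZero_homology_homComplex_neg_iff (X : ChainComplex A ℤ) (W : A) (i : ℤ) :
    IsZero ((homComplex X W).homology (-i)) ↔
      ∀ g : X.X i ⟶ W, X.d (i+1) i ≫ g = 0 → ∃ h : X.X (i-1) ⟶ W, X.d i (i-1) ≫ h = g := by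
  have shifted := isZero_homology_homComplex_iff X W (-i)
  rwa [neg_neg, show -(-i-1) = i+1 by ring, show -(-i+1) = i-1 by ring] at shifted

/-- A chain complex `X` is `I`-trivial iff for every `i` the morphism
`coker(d_{i+1}) ⟶ X_{i-1}` induced by `d_i` is an `I`-monomorphism. -/
theorem isITrivial_iff_coker_isIMono (I : Set A) (X : ChainComplex A ℤ) :
    IsITrivial I X ↔
      ∀ i : ℤ, IsIMono I
        (cokernel.desc (X.d (i+1) i) (X.d i (i-1)) (X.d_comp_d _ _ _)) := by
  simp only [isIMono_cokernelDesc_iff, ← isZero_homology_homComplex_neg_iff]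
  exact ⟨fun H i W hW => H W hW (-i), fun H W hW n => neg_neg n ▸ H (-n) W hW⟩
end

section
/- Let R be a commutative Noetherian ring and p, q prime ideals. The p-torsion submodule Γ_p(E(R/q)) (elements annihilated by some power p^m) equals E(R/q) if p ⊆ q, and equals zero otherwise. -/
/-- `E` together with `i : Q →ₗ[R] E` is an injective hull (injective envelope) of the
module `Q` : `E` is injective, `i` is injective, and the image of `i` is an essential
submodule of `E`. -/
structure IsInjectiveHull (R : Type*) [Ring R] (Q : Type*) [AddCommGroup Q] [Module R Q]
    (E : Type*) [AddCommGroup E] [Module R E] (i : Q →ₗ[R] E) : Prop where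
  injective : Module.Injective R E
  inj : Function.Injective i
  essential : ∀ N : Submodule R E, N ≠ ⊥ → N ⊓ LinearMap.range i ≠ ⊥

/-- An element `x` of a module is `p`-torsion if it is annihilated by some power
`p ^ m` with `m ≥ 1`. -/
def IsTorsionAt {R : Type*} [CommRing R] (p : Ideal R)
    {E : Type*} [AddCommGroup E] [Module R E] (x : E) : Prop :=
  ∃ m : ℕ, 1 ≤ m ∧ ∀ a ∈ p ^ m, a • x = 0

/-- Key consequence of essentiality: any nonzero element of the hull has a nonzero
multiple killed by `q`. -/
theorem exists_smul_ne_zero_of_ne_zero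
    {R : Type*} [CommRing R] {q : Ideal R}
    {E : Type*} [AddCommGroup E] [Module R E] {i : (R ⧸ q) →ₗ[R] E}
    (hE : IsInjectiveHull R (R ⧸ q) E i) {y : E} (hy : y ≠ 0) :
    ∃ r : R, r • y ≠ 0 ∧ ∀ a ∈ q, a • (r • y) = 0 := by
  have hN : Submodule.span R {y} ≠ ⊥ := by
    simpa [Submodule.span_singleton_eq_bot] using hy
  have h := hE.essential _ hN
  rw [Submodule.ne_bot_iff] at h
  obtain ⟨z, hz, hz0⟩ := h
  obtain ⟨hz1, w, hw⟩ := hz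
  obtain ⟨r, rfl⟩ := Submodule.mem_span_singleton.mp hz1
  obtain ⟨s, rfl⟩ := Ideal.Quotient.mk_surjective w
  refine ⟨r, hz0, fun a ha => ?_⟩
  have : a • (Ideal.Quotient.mk q s) = 0 := by
    have h1 : a • (Ideal.Quotient.mk q s) = Ideal.Quotient.mk q (a * s) :=
      (Submodule.Quotient.mk_smul q a s).symm
    rw [h1, Ideal.Quotient.eq_zero_iff_mem]
    exact q.mul_mem_right s ha
  calc a • r • y = a • i (Ideal.Quotient.mk q s) := by rw [hw]
    _ = i (a • Ideal.Quotient.mk q s) := (map_smul i a _).symm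
    _ = 0 := by rw [this, map_zero]

/-- For a commutative Noetherian ring `R` and prime ideals `p`, `q`, the `p`-torsion
submodule `Γ_p(E(R/q))` equals all of `E(R/q)` if `p ⊆ q`, and is zero otherwise. -/
theorem torsion_injectiveHull
    (R : Type*) [CommRing R] [IsNoetherianRing R]
    (p q : Ideal R) (hp : p.IsPrime) (hq : q.IsPrime)
    (E : Type*) [AddCommGroup E] [Module R E] (i : (R ⧸ q) →ₗ[R] E)
    (hE : IsInjectiveHull R (R ⧸ q) E i) :
    (p ≤ q → ∀ x : E, IsTorsionAt p x) ∧
    (¬ p ≤ q → ∀ x : E, IsTorsionAt p x → x = 0) := by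
  constructor
  · -- p ≤ q : every element is p-torsion
    intro hpq x
    by_cases hx : x = 0
    · exact ⟨1, le_rfl, fun a _ => by simp [hx]⟩
    -- every a ∈ q has a power killing x
    have key : ∀ a ∈ q, ∃ n : ℕ, a ^ n • x = 0 := by
      intro a ha
      by_contra hcon
      push_neg at hcon
      -- chain of annihilators of a^n • x
      set f : ℕ →o Ideal R :=
        ⟨fun n => (Submodule.span R {a ^ n • x}).annihilator, by
          intro n m hnm r hr
          rw [Submodule.mem_annihilator_span_singleton] at hr ⊢
          have : a ^ m • x = a ^ (m - n) • a ^ n • x := by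
            rw [smul_smul, ← pow_add, Nat.sub_add_cancel hnm]
          rw [this, smul_comm, hr, smul_zero]⟩ with hf
      obtain ⟨N, hN⟩ := monotone_stabilizes_iff_noetherian.mpr
        (inferInstance : IsNoetherian R R) f
      have hy : a ^ N • x ≠ 0 := hcon N
      obtain ⟨r, hr, hrq⟩ := exists_smul_ne_zero_of_ne_zero hE hy
      apply hr
      have h1 : a • (r • a ^ N • x) = 0 := hrq a ha
      have h2 : r ∈ f (N + 1) := by
        show r ∈ (Submodule.span R {a ^ (N + 1) • x}).annihilator
        rw [Submodule.mem_annihilator_span_singleton]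
        have he : a ^ (N + 1) • x = a • a ^ N • x := by
          rw [smul_smul, ← pow_succ']
        rw [he, smul_comm]
        exact h1
      have h3 : r ∈ f N := by rw [hN (N + 1) (Nat.le_succ N)]; exact h2
      have h4 : r ∈ (Submodule.span R {a ^ N • x}).annihilator := h3
      rw [Submodule.mem_annihilator_span_singleton] at h4
      exact h4
    -- hence q ≤ radical of the annihilator of x
    have hrad : q ≤ ((Submodule.span R {x}).annihilator).radical := by
      intro a ha
      obtain ⟨n, hn⟩ := key a ha
      exact ⟨n, by rwa [Submodule.mem_annihilator_span_singleton]⟩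
    obtain ⟨n, hn⟩ := Ideal.exists_pow_le_of_le_radical_of_fg hrad
      (IsNoetherian.noetherian q)
    refine ⟨max n 1, le_max_right _ _, fun b hb => ?_⟩
    have hb' : b ∈ (Submodule.span R {x}).annihilator := by
      apply hn
      have h1 : p ^ max n 1 ≤ q ^ max n 1 := Ideal.pow_right_mono hpq _
      have h2 : q ^ max n 1 ≤ q ^ n := Ideal.pow_le_pow_right (le_max_left _ _)
      exact h2 (h1 hb)
    rwa [Submodule.mem_annihilator_span_singleton] at hb'
  · -- ¬ p ≤ q : torsion elements vanish
    intro hpq x hx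
    by_contra hx0
    obtain ⟨m, hm1, hm⟩ := hx
    obtain ⟨r, hr, hrq⟩ := exists_smul_ne_zero_of_ne_zero hE hx0
    -- show p ^ m kills r • x trivially, and derive p ≤ q via annihilator of image element
    apply hpq
    apply Ideal.IsPrime.le_of_pow_le (hP := hq) (n := m)
    -- need p ^ m ≤ q
    intro b hb
    -- b • x = 0
    have hbx : b • x = 0 := hm b hb
    -- the element r • x lies in the image of i, nonzero
    -- reconstruct the data
    have hN : Submodule.span R {x} ≠ ⊥ := by
      simpa [Submodule.span_singleton_eq_bot] using hx0
    have h := hE.essential _ hN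
    rw [Submodule.ne_bot_iff] at h
    obtain ⟨z, ⟨hz1, w, hw⟩, hz0⟩ := h
    obtain ⟨r', rfl⟩ := Submodule.mem_span_singleton.mp hz1
    obtain ⟨s, rfl⟩ := Ideal.Quotient.mk_surjective w
    have hs : s ∉ q := by
      intro hs
      apply hz0
      rw [← hw, Ideal.Quotient.eq_zero_iff_mem.mpr hs, map_zero]
    have hbz : i (b • Ideal.Quotient.mk q s) = 0 := by
      rw [map_smul, hw, smul_comm, hbx, smul_zero]
    have : b • Ideal.Quotient.mk q s = 0 := by
      apply hE.inj
      rw [hbz, map_zero]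
    have : Ideal.Quotient.mk q (b * s) = 0 := by
      rw [← this]; exact Submodule.Quotient.mk_smul q b s
    rw [Ideal.Quotient.eq_zero_iff_mem] at this
    exact (hq.mem_or_mem this).resolve_right hs
end
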